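/- Let ρ = log(|w|²+δ²) with |w|²+δ² < e^{-e}, η = -ρ + log(-ρ), ψ = -log η. Then the inequality ∂∂̄ψ ≥ (1 + η/(-ρ+1)²) ∂ψ ∧ ∂̄ψ holds pointwise (as an inequality of hermitian (1,1)-forms on ℂ). -/

import Mathlib

/-!
Write `ψ = h ∘ ρ` with `h s = -log (-s + log (-s))`, so that `η = -ρ + log (-ρ)` and
`h' = (1 - ρ⁻¹) / η ≥ 0`. The chain rule gives `∂∂̄ψ = h'(ρ) ∂∂̄ρ + h''(ρ) |∂ρ|²` and
`|∂ψ|² = h'(ρ)² |∂ρ|²`, and a one-variable computation shows `h'' = (1 + η / (1 - ρ)²) h'²`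
exactly. The inequality therefore reduces to the subharmonicity of `ρ`:
`∂∂̄ρ = δ² / (|w|² + δ²)² ≥ 0`.
-/

/-- The Wirtinger derivative `∂f/∂w = (f_x - i f_y)/2` of a real-valued function on `ℂ`. -/
noncomputable def wirtingerDeriv (f : ℂ → ℝ) (w : ℂ) : ℂ :=
  (1/2 : ℂ) * (((fderiv ℝ f w 1 : ℝ) : ℂ) - Complex.I * ((fderiv ℝ f w Complex.I : ℝ) : ℂ))

/-- The coefficient of the complex Hessian `∂∂̄f`, namely `∂²f/∂w∂w̄ = (f_xx + f_yy)/4`. -/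
noncomputable def ddbarCoeff (f : ℂ → ℝ) (w : ℂ) : ℝ :=
  (1/4) * ((iteratedFDeriv ℝ 2 f w) ![1, 1] + (iteratedFDeriv ℝ 2 f w) ![Complex.I, Complex.I])

noncomputable def rhoF (δ : ℝ) (w : ℂ) : ℝ := Real.log (Complex.normSq w + δ^2)
noncomputable def etaF (δ : ℝ) (w : ℂ) : ℝ := -(rhoF δ w) + Real.log (-(rhoF δ w))
noncomputable def psiF (δ : ℝ) (w : ℂ) : ℝ := -Real.log (etaF δ w)

open Complex ComplexConjugate Topology

theorem normSq_wirtingerDeriv (f : ℂ → ℝ) (w : ℂ) :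
    normSq (wirtingerDeriv f w) = (fderiv ℝ f w 1 ^ 2 + fderiv ℝ f w I ^ 2) / 4 := by
  simp only [wirtingerDeriv, one_div, normSq_apply, mul_re, inv_re, re_ofNat,
    div_self_mul_self', sub_re, ofReal_re, I_re, zero_mul, I_im, ofReal_im, mul_zero, sub_self,
    sub_zero, inv_im, im_ofNat, neg_zero, zero_div, sub_im, mul_im, one_mul, zero_add, zero_sub,
    mul_neg, add_zero, neg_mul, neg_neg]
  ring

theorem ddbarCoeff_eq_fderiv_fderiv (f : ℂ → ℝ) (w : ℂ) :
    ddbarCoeff f w = (fderiv ℝ (fderiv ℝ f) w 1 1 + fderiv ℝ (fderiv ℝ f) w I I) / 4 := by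
  simp only [ddbarCoeff, iteratedFDeriv_two_apply, Matrix.cons_val_zero, Matrix.cons_val_one]
  ring

theorem fderiv_normSq_add_const (c : ℝ) :
    fderiv ℝ (fun z : ℂ ↦ normSq z + c) = ⇑((2 : ℝ) • innerSL ℝ (E := ℂ)) := by
  ext z : 1
  simp only [normSq_eq_norm_sq, fderiv_add_const, fderiv_norm_sq_apply]
  simp [two_smul]

theorem wirtingerDeriv_normSq_add_const (c : ℝ) (w : ℂ) :
    wirtingerDeriv (fun z ↦ normSq z + c) w = conj w := by
  rw [wirtingerDeriv, fderiv_normSq_add_const]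
  apply Complex.ext <;> simp [innerSL_apply_apply, Complex.inner]

theorem ddbarCoeff_normSq_add_const (c : ℝ) (w : ℂ) :
    ddbarCoeff (fun z ↦ normSq z + c) w = 1 := by
  rw [ddbarCoeff_eq_fderiv_fderiv, fderiv_normSq_add_const, ContinuousLinearMap.fderiv]
  simp only [smul_apply, smul_eq_mul]
  rw [innerSL_apply_apply, innerSL_apply_apply]
  norm_num [Complex.inner]

theorem wirtingerDeriv_comp {h : ℝ → ℝ} {u : ℂ → ℝ} {w : ℂ}
    (hh : DifferentiableAt ℝ h (u w)) (hu : DifferentiableAt ℝ u w) :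
    wirtingerDeriv (h ∘ u) w = deriv h (u w) * wirtingerDeriv u w := by
  rw [wirtingerDeriv, wirtingerDeriv,
    (hh.hasDerivAt.comp_hasFDerivAt w hu.hasFDerivAt).fderiv]
  simp only [smul_apply, smul_eq_mul, ofReal_mul]
  ring

theorem ddbarCoeff_comp {h : ℝ → ℝ} {u : ℂ → ℝ} {w : ℂ}
    (hh : ContDiffAt ℝ 2 h (u w)) (hu : ContDiffAt ℝ 2 u w) :
    ddbarCoeff (h ∘ u) w =
      deriv h (u w) * ddbarCoeff u w + deriv (deriv h) (u w) * normSq (wirtingerDeriv u w) := by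
  have hfirst : fderiv ℝ (h ∘ u) =ᶠ[𝓝 w] fun z ↦ deriv h (u z) • fderiv ℝ u z := by
    filter_upwards [hu.eventually (by simp),
      hu.continuousAt.eventually (hh.eventually (by simp))] with z huz hhz
    exact ((hhz.differentiableAt (by simp)).hasDerivAt.comp_hasFDerivAt z
      (huz.differentiableAt (by simp)).hasFDerivAt).fderiv
  have hh' : DifferentiableAt ℝ (deriv h) (u w) :=
    (hh.derivWithin (m := 1) (by norm_num)).differentiableAt (by simp)
  have hu' : DifferentiableAt ℝ (fderiv ℝ u) w :=
    (hu.fderiv_right (m := 1) (by norm_num)).differentiableAt (by simp)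
  have hsecond : HasFDerivAt (fun z ↦ deriv h (u z) • fderiv ℝ u z) _ w :=
    (hh'.hasDerivAt.comp_hasFDerivAt w (hu.differentiableAt (by simp)).hasFDerivAt).smul
      hu'.hasFDerivAt
  rw [ddbarCoeff_eq_fderiv_fderiv, ddbarCoeff_eq_fderiv_fderiv, normSq_wirtingerDeriv,
    hfirst.fderiv_eq, hsecond.fderiv]
  simp only [Function.comp_apply, add_apply, smul_apply, ContinuousLinearMap.smulRight_apply,
    smul_eq_mul]
  ring

theorem contDiff_normSq_add_const (c : ℝ) : ContDiff ℝ 2 fun z : ℂ ↦ normSq z + c := by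
  simp only [normSq_eq_norm_sq]
  exact contDiff_norm_sq ℝ |>.add contDiff_const

theorem ddbarCoeff_log_normSq_add_const {c : ℝ} {w : ℂ} (hw : 0 < normSq w + c) :
    ddbarCoeff (fun z ↦ Real.log (normSq z + c)) w = c / (normSq w + c) ^ 2 := by
  have := ddbarCoeff_comp (Real.contDiffAt_log.2 hw.ne') (contDiff_normSq_add_const c).contDiffAt
  rw [Function.comp_def] at this
  rw [this, ddbarCoeff_normSq_add_const, wirtingerDeriv_normSq_add_const, normSq_conj,
    Real.deriv_log', deriv_inv]
  field_simp
  ring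

theorem contDiffAt_log_normSq_add_const {c : ℝ} {w : ℂ} (hw : 0 < normSq w + c) :
    ContDiffAt ℝ 2 (fun z ↦ Real.log (normSq z + c)) w :=
  (contDiff_normSq_add_const c).contDiffAt.log hw.ne'

noncomputable def etaOfRho (s : ℝ) : ℝ := -s + Real.log (-s)

noncomputable def psiOfRho (s : ℝ) : ℝ := -Real.log (etaOfRho s)

theorem etaOfRho_pos {s : ℝ} (hs : s < -1) : 0 < etaOfRho s := by
  have := Real.log_pos (show 1 < -s by linarith)
  rw [etaOfRho]
  linarith

theorem hasDerivAt_etaOfRho {s : ℝ} (hs : s < 0) : HasDerivAt etaOfRho (-(1 - s⁻¹)) s := by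
  have h : HasDerivAt (fun x ↦ -x + Real.log (-x)) _ s :=
    (hasDerivAt_neg s).add ((hasDerivAt_neg s).log (neg_ne_zero.2 hs.ne))
  exact h.congr_deriv (by ring)

theorem hasDerivAt_psiOfRho {s : ℝ} (hs : s < -1) :
    HasDerivAt psiOfRho ((1 - s⁻¹) / etaOfRho s) s := by
  have h : HasDerivAt (fun x ↦ -Real.log (etaOfRho x)) _ s :=
    ((hasDerivAt_etaOfRho (by linarith)).log (etaOfRho_pos hs).ne').neg
  exact h.congr_deriv (by ring)

theorem contDiffAt_psiOfRho {s : ℝ} (hs : s < -1) : ContDiffAt ℝ 2 psiOfRho s :=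
  have hη : ContDiffAt ℝ 2 etaOfRho s :=
    contDiffAt_id.neg.add (contDiffAt_id.neg.log (by simp only [id, neg_ne_zero]; linarith))
  (hη.log (etaOfRho_pos hs).ne').neg

theorem deriv_psiOfRho_nonneg {s : ℝ} (hs : s < -1) : 0 ≤ deriv psiOfRho s := by
  rw [(hasDerivAt_psiOfRho hs).deriv]
  have : s⁻¹ < 0 := inv_lt_zero.2 (by linarith)
  exact div_nonneg (by linarith) (etaOfRho_pos hs).le

theorem deriv_deriv_psiOfRho {s : ℝ} (hs : s < -1) :
    deriv (deriv psiOfRho) s = (1 + etaOfRho s / (-s + 1) ^ 2) * deriv psiOfRho s ^ 2 := by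
  have hderiv : deriv psiOfRho =ᶠ[𝓝 s] fun x ↦ (1 - x⁻¹) / etaOfRho x := by
    filter_upwards [Iio_mem_nhds hs] with x hx
    exact (hasDerivAt_psiOfRho hx).deriv
  have hs0 : s ≠ 0 := by linarith
  have hη := (etaOfRho_pos hs).ne'
  have h : HasDerivAt (fun x ↦ (1 - x⁻¹) / etaOfRho x) _ s :=
    ((hasDerivAt_inv hs0).const_sub 1).div (hasDerivAt_etaOfRho (by linarith)) hη
  rw [hderiv.deriv_eq, h.deriv, (hasDerivAt_psiOfRho hs).deriv]
  have : -s + 1 ≠ 0 := by linarith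
  field_simp
  ring

theorem rhoF_lt_neg_one {δ : ℝ} {w : ℂ} (ht : 0 < normSq w + δ ^ 2)
    (hw : normSq w + δ ^ 2 < Real.exp (-Real.exp 1)) : rhoF δ w < -1 := by
  have hlog : rhoF δ w < -Real.exp 1 := Real.log_exp (-Real.exp 1) ▸ Real.log_lt_log ht hw
  linarith [Real.one_lt_exp_iff.2 one_pos]

/-- The pointwise inequality `∂∂̄ψ ≥ (1 + η/(-ρ+1)²) ∂ψ ∧ ∂̄ψ` of hermitian (1,1)-forms
on ℂ, expressed through their scalar coefficients. -/
theorem stmt7 (δ : ℝ) (hδ : 0 < δ) (w : ℂ)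
    (hw : Complex.normSq w + δ^2 < Real.exp (-Real.exp 1)) :
    (1 + etaF δ w / (-(rhoF δ w) + 1)^2) * Complex.normSq (wirtingerDeriv (psiF δ) w)
      ≤ ddbarCoeff (psiF δ) w := by
  have ht : 0 < normSq w + δ ^ 2 := add_pos_of_nonneg_of_pos (normSq_nonneg w) (by positivity)
  have hρ := rhoF_lt_neg_one ht hw
  have hρ_smooth : ContDiffAt ℝ 2 (rhoF δ) w := contDiffAt_log_normSq_add_const ht
  have hρ_subharmonic : 0 ≤ ddbarCoeff (rhoF δ) w := by
    have : ddbarCoeff (rhoF δ) w = δ ^ 2 / (normSq w + δ ^ 2) ^ 2 :=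
      ddbarCoeff_log_normSq_add_const ht
    rw [this]
    positivity
  have hψ : psiF δ = psiOfRho ∘ rhoF δ := rfl
  have hη : etaF δ w = etaOfRho (rhoF δ w) := rfl
  rw [hψ, ddbarCoeff_comp (contDiffAt_psiOfRho hρ) hρ_smooth,
    wirtingerDeriv_comp ((contDiffAt_psiOfRho hρ).differentiableAt (by simp))
      (hρ_smooth.differentiableAt (by simp)),
    normSq_mul, normSq_ofReal, deriv_deriv_psiOfRho hρ, hη]
  linarith [mul_nonneg (deriv_psiOfRho_nonneg hρ) hρ_subharmonic]
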